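/- arXiv:2601.19195 — 2 statements merged into one kernel-verified Lean document; each statement's English description precedes it below -/
import Mathlib

section
/- Every 3×3 PSD diagonal biquadratic form P(x,y) = Σ_{i,j=1}^3 a_{ij} x_i² y_j² with all a_{ij} ≥ 0 can be written as a sum of at most 7 squares of bilinear forms. -/
set_option maxRecDepth 8000
set_option maxHeartbeats 2000000

/-- `L` gives an SOS decomposition of the biquadratic form `P` into `R` squares
of bilinear forms. -/
def IsSOSDecomp (m n R : ℕ) (P : (Fin m → ℝ) → (Fin n → ℝ) → ℝ)
    (L : Fin R → Fin m → Fin n → ℝ) : Prop :=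
  ∀ x y, P x y = ∑ t, (∑ i, ∑ j, L t i j * x i * y j)^2

lemma two_sq (b c d X Y Z W : ℝ) (hb : 0 ≤ b) (hc : 0 ≤ c) (hd : 0 < d)
    (hXY : X * W = Y * Z) :
    (Real.sqrt (b*c/d) * X + Real.sqrt d * W)^2 + (Real.sqrt b * Y - Real.sqrt c * Z)^2
      = b*c/d * X^2 + b * Y^2 + c * Z^2 + d * W^2 := by
  have h1 : Real.sqrt (b*c/d) * Real.sqrt d = Real.sqrt (b*c) := by
    rw [← Real.sqrt_mul (by positivity)]
    congr 1
    field_simp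
  have h2 : Real.sqrt b * Real.sqrt c = Real.sqrt (b*c) := (Real.sqrt_mul hb c).symm
  have e1 : Real.sqrt (b*c/d) ^ 2 = b*c/d := Real.sq_sqrt (by positivity)
  have e2 : Real.sqrt d ^ 2 = d := Real.sq_sqrt hd.le
  have e3 : Real.sqrt b ^ 2 = b := Real.sq_sqrt hb
  have e4 : Real.sqrt c ^ 2 = c := Real.sq_sqrt hc
  linear_combination X^2*e1 + W^2*e2 + Y^2*e3 + Z^2*e4 + 2*X*W*h1 - 2*Y*Z*h2 +
    2*Real.sqrt (b*c)*hXY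

lemma three_sq (a b c d : ℝ) (ha : 0 ≤ a) (hb : 0 ≤ b) (hc : 0 ≤ c) (hd : 0 ≤ d) :
    ∃ M : Fin 3 → Fin 4 → ℝ, ∀ X Y Z W : ℝ, X * W = Y * Z →
      a*X^2 + b*Y^2 + c*Z^2 + d*W^2
        = ∑ t, (M t 0 * X + M t 1 * Y + M t 2 * Z + M t 3 * W)^2 := by
  rcases hd.eq_or_lt with hd0 | hd0
  · refine ⟨![![Real.sqrt a,0,0,0],![0,Real.sqrt b,0,0],![0,0,Real.sqrt c,0]], ?_⟩
    intro X Y Z W h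
    have ea : Real.sqrt a ^ 2 = a := Real.sq_sqrt ha
    have eb : Real.sqrt b ^ 2 = b := Real.sq_sqrt hb
    have ec : Real.sqrt c ^ 2 = c := Real.sq_sqrt hc
    simp only [Fin.sum_univ_three, Matrix.cons_val_zero, Matrix.cons_val_one,
      Matrix.head_cons, Matrix.cons_val_two, Matrix.tail_cons, Matrix.cons_val_three]
    linear_combination -X^2*ea - Y^2*eb - Z^2*ec - W^2*hd0
  · rcases le_or_gt (b*c) (a*d) with hbc | hbc
    · refine ⟨![![Real.sqrt (b*c/d), 0, 0, Real.sqrt d],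
               ![0, Real.sqrt b, -Real.sqrt c, 0],
               ![Real.sqrt (a - b*c/d), 0, 0, 0]], ?_⟩
      intro X Y Z W h
      have hle : b*c/d ≤ a := (div_le_iff₀ hd0).2 (by linarith)
      have key := two_sq b c d X Y Z W hb hc hd0 h
      have e3 : Real.sqrt (a - b*c/d) ^ 2 = a - b*c/d := Real.sq_sqrt (by linarith)
      simp only [Fin.sum_univ_three, Matrix.cons_val_zero, Matrix.cons_val_one,
        Matrix.head_cons, Matrix.cons_val_two, Matrix.tail_cons, Matrix.cons_val_three]
      linear_combination -key - X^2*e3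
    · have hc0 : 0 < c := by nlinarith
      refine ⟨![![0, Real.sqrt (a*d/c), Real.sqrt c, 0],
               ![Real.sqrt a, 0, 0, -Real.sqrt d],
               ![0, Real.sqrt (b - a*d/c), 0, 0]], ?_⟩
      intro X Y Z W h
      have hle : a*d/c ≤ b := (div_le_iff₀ hc0).2 (by nlinarith)
      have key := two_sq a d c Y X W Z ha hd hc0 h.symm
      have e3 : Real.sqrt (b - a*d/c) ^ 2 = b - a*d/c := Real.sq_sqrt (by linarith)
      simp only [Fin.sum_univ_three, Matrix.cons_val_zero, Matrix.cons_val_one,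
        Matrix.head_cons, Matrix.cons_val_two, Matrix.tail_cons, Matrix.cons_val_three]
      linear_combination -key - Y^2*e3

/-- every 3×3 PSD diagonal biquadratic form
`P = Σ a_{ij} x_i²y_j²` with all `a_{ij} ≥ 0` is a sum of at most 7 squares of
bilinear forms. -/
theorem diagonal_3x3_seven_squares (a : Fin 3 → Fin 3 → ℝ)
    (ha : ∀ i j, 0 ≤ a i j) :
    ∃ L : Fin 7 → Fin 3 → Fin 3 → ℝ,
      IsSOSDecomp 3 3 7 (fun x y => ∑ i, ∑ j, a i j * (x i)^2 * (y j)^2) L := by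
  rcases (ha 1 1).eq_or_lt with h11 | h11
  · -- center entry is zero
    obtain ⟨M, hM⟩ := three_sq (a 0 0) (a 0 2) (a 2 0) (a 2 2)
      (ha 0 0) (ha 0 2) (ha 2 0) (ha 2 2)
    refine ⟨![
      ![![M 0 0, 0, M 0 1], ![0,0,0], ![M 0 2, 0, M 0 3]],
      ![![M 1 0, 0, M 1 1], ![0,0,0], ![M 1 2, 0, M 1 3]],
      ![![M 2 0, 0, M 2 1], ![0,0,0], ![M 2 2, 0, M 2 3]],
      ![![0, Real.sqrt (a 0 1), 0], ![0,0,0], ![0,0,0]],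
      ![![0,0,0], ![Real.sqrt (a 1 0),0,0], ![0,0,0]],
      ![![0,0,0], ![0,0,Real.sqrt (a 1 2)], ![0,0,0]],
      ![![0,0,0], ![0,0,0], ![0,Real.sqrt (a 2 1),0]]], ?_⟩
    intro x y
    have hM' := hM (x 0 * y 0) (x 0 * y 2) (x 2 * y 0) (x 2 * y 2) (by ring)
    rw [Fin.sum_univ_three] at hM'
    have e01 : Real.sqrt (a 0 1) ^ 2 = a 0 1 := Real.sq_sqrt (ha 0 1)
    have e10 : Real.sqrt (a 1 0) ^ 2 = a 1 0 := Real.sq_sqrt (ha 1 0)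
    have e12 : Real.sqrt (a 1 2) ^ 2 = a 1 2 := Real.sq_sqrt (ha 1 2)
    have e21 : Real.sqrt (a 2 1) ^ 2 = a 2 1 := Real.sq_sqrt (ha 2 1)
    simp only [Fin.sum_univ_succ, Fin.sum_univ_zero, Matrix.cons_val_zero,
      Matrix.cons_val_one, Matrix.cons_val_two, Matrix.cons_val_succ, Matrix.head_cons,
      Matrix.tail_cons, Fin.succ_zero_eq_one, Fin.succ_one_eq_two]
    linear_combination hM' - (x 0*y 1)^2*e01 - (x 1*y 0)^2*e10 - (x 1*y 2)^2*e12
      - (x 2*y 1)^2*e21 - (x 1*y 1)^2*h11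
  · rcases le_or_gt (a 0 1 * a 1 0) (a 0 0 * a 1 1) with hbc | hbc
    · -- split a00; 2 squares on block {0,1}×{0,1}, 3 on {0,2}×{0,2}, 2 singles
      have hα : a 0 1 * a 1 0 / a 1 1 ≤ a 0 0 := (div_le_iff₀ h11).2 hbc
      obtain ⟨M, hM⟩ := three_sq (a 0 0 - a 0 1 * a 1 0 / a 1 1) (a 0 2) (a 2 0) (a 2 2)
        (by linarith) (ha 0 2) (ha 2 0) (ha 2 2)
      refine ⟨![
        ![![Real.sqrt (a 0 1 * a 1 0 / a 1 1),0,0], ![0,Real.sqrt (a 1 1),0], ![0,0,0]],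
        ![![0,Real.sqrt (a 0 1),0], ![-Real.sqrt (a 1 0),0,0], ![0,0,0]],
        ![![M 0 0, 0, M 0 1], ![0,0,0], ![M 0 2, 0, M 0 3]],
        ![![M 1 0, 0, M 1 1], ![0,0,0], ![M 1 2, 0, M 1 3]],
        ![![M 2 0, 0, M 2 1], ![0,0,0], ![M 2 2, 0, M 2 3]],
        ![![0,0,0], ![0,0,Real.sqrt (a 1 2)], ![0,0,0]],
        ![![0,0,0], ![0,0,0], ![0,Real.sqrt (a 2 1),0]]], ?_⟩
      intro x y
      have key := two_sq (a 0 1) (a 1 0) (a 1 1) (x 0*y 0) (x 0*y 1) (x 1*y 0) (x 1*y 1)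
        (ha 0 1) (ha 1 0) h11 (by ring)
      have hM' := hM (x 0 * y 0) (x 0 * y 2) (x 2 * y 0) (x 2 * y 2) (by ring)
      rw [Fin.sum_univ_three] at hM'
      have e12 : Real.sqrt (a 1 2) ^ 2 = a 1 2 := Real.sq_sqrt (ha 1 2)
      have e21 : Real.sqrt (a 2 1) ^ 2 = a 2 1 := Real.sq_sqrt (ha 2 1)
      simp only [Fin.sum_univ_succ, Fin.sum_univ_zero, Matrix.cons_val_zero,
        Matrix.cons_val_one, Matrix.cons_val_two, Matrix.cons_val_succ, Matrix.head_cons,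
        Matrix.tail_cons, Fin.succ_zero_eq_one, Fin.succ_one_eq_two]
      linear_combination -key + hM' - (x 1*y 2)^2*e12 - (x 2*y 1)^2*e21
    · -- split a01; 2 squares on block {0,1}×{0,1} (other orientation),
      -- 3 on {0,2}×{1,2}, 2 singles
      have h10 : 0 < a 1 0 := by nlinarith [ha 0 1, ha 1 0, mul_nonneg (ha 0 0) (ha 1 1)]
      have hβ : a 0 0 * a 1 1 / a 1 0 ≤ a 0 1 := (div_le_iff₀ h10).2 hbc.le
      obtain ⟨M, hM⟩ := three_sq (a 0 1 - a 0 0 * a 1 1 / a 1 0) (a 0 2) (a 2 1) (a 2 2)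
        (by linarith) (ha 0 2) (ha 2 1) (ha 2 2)
      refine ⟨![
        ![![0,Real.sqrt (a 0 0 * a 1 1 / a 1 0),0], ![Real.sqrt (a 1 0),0,0], ![0,0,0]],
        ![![Real.sqrt (a 0 0),0,0], ![0,-Real.sqrt (a 1 1),0], ![0,0,0]],
        ![![0, M 0 0, M 0 1], ![0,0,0], ![0, M 0 2, M 0 3]],
        ![![0, M 1 0, M 1 1], ![0,0,0], ![0, M 1 2, M 1 3]],
        ![![0, M 2 0, M 2 1], ![0,0,0], ![0, M 2 2, M 2 3]],
        ![![0,0,0], ![0,0,Real.sqrt (a 1 2)], ![0,0,0]],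
        ![![0,0,0], ![0,0,0], ![Real.sqrt (a 2 0),0,0]]], ?_⟩
      intro x y
      have key := two_sq (a 0 0) (a 1 1) (a 1 0) (x 0*y 1) (x 0*y 0) (x 1*y 1) (x 1*y 0)
        (ha 0 0) (ha 1 1) h10 (by ring)
      have hM' := hM (x 0 * y 1) (x 0 * y 2) (x 2 * y 1) (x 2 * y 2) (by ring)
      rw [Fin.sum_univ_three] at hM'
      have e12 : Real.sqrt (a 1 2) ^ 2 = a 1 2 := Real.sq_sqrt (ha 1 2)
      have e20 : Real.sqrt (a 2 0) ^ 2 = a 2 0 := Real.sq_sqrt (ha 2 0)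
      simp only [Fin.sum_univ_succ, Fin.sum_univ_zero, Matrix.cons_val_zero,
        Matrix.cons_val_one, Matrix.cons_val_two, Matrix.cons_val_succ, Matrix.head_cons,
        Matrix.tail_cons, Fin.succ_zero_eq_one, Fin.succ_one_eq_two]
      linear_combination -key + hM' - (x 1*y 2)^2*e12 - (x 2*y 0)^2*e20
end

section
/- Denote by BSR_simple(m,n) the maximum SOS rank over simple m×n biquadratic forms. For m, n ≥ 3: BSR_simple(m, n+1) ≥ BSR_simple(m, n) + 1, and by induction BSR_simple(m, n) ≥ m + n for all m, n ≥ 3. -/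
/-- The SOS rank: the minimal number of squares of bilinear forms summing to `P`. -/
noncomputable def sosRank (m n : ℕ) (P : (Fin m → ℝ) → (Fin n → ℝ) → ℝ) : ℕ :=
  sInf {R | ∃ L : Fin R → Fin m → Fin n → ℝ, IsSOSDecomp m n R P L}

/-- The simple biquadratic form with support `S`. -/
def simpleForm (m n : ℕ) (S : Finset (Fin m × Fin n)) :
    (Fin m → ℝ) → (Fin n → ℝ) → ℝ :=
  fun x y => ∑ p ∈ S, (x p.1)^2 * (y p.2)^2

/-- `BSR_simple(m,n)`: the maximum SOS rank over simple `m×n` biquadratic forms. -/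
noncomputable def BSRsimple (m n : ℕ) : ℕ :=
  sSup {R | ∃ S : Finset (Fin m × Fin n), sosRank m n (simpleForm m n S) = R}

/-!
Read a sum of squares of bilinear forms through its coefficient vectors `(L t i j)_t ∈ ℝ^R`.

Step: write a decomposition of `P + x_{i₀}² y_{n+1}²` as `∑ (M_t(x,y) + y_{n+1} N_t(x))²`.
Comparing powers of `y_{n+1}` gives `∑ M_t² = P`, `∑ M_t N_t = 0` and `∑ N_t² = x_{i₀}²`;
the last forces `N_t = a_t x_{i₀}` with `∑ a_t² = 1`, and then the middle one says
`∑ a_t M_t = 0`. Expanding `(M_t)_t` in an orthonormal basis of `a^⊥` rewrites `∑ M_t² = P`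
with one square fewer, so the SOS rank goes up by one.

Base: if the support `S` of a simple form contains no rectangle, then testing the decomposition
on `x = e_i (+ e_k)`, `y = e_j ± e_l` shows that the coefficient vectors of the entries of `S`
are orthonormal, so the SOS rank is at least `|S|`. A hexagon in `3 × 3` gives
`BSR_simple(3,3) ≥ 6`, and the symmetry `BSR_simple(m,n) = BSR_simple(n,m)` lets the step
grow both dimensions.
-/

open Finset Module
open scoped RealInnerProductSpace

lemma exists_sum_sq_inner_eq_norm_sq_of_inner_eq_zero {E : Type*} [NormedAddCommGroup E]
    [InnerProductSpace ℝ E] {R : ℕ} (hE : finrank ℝ E = R + 1) {c : E} (hc : c ≠ 0) :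
    ∃ u : Fin R → E, ∀ w, ⟪c, w⟫ = 0 → ∑ s, ⟪u s, w⟫ ^ 2 = ‖w‖ ^ 2 := by
  have : Fact (finrank ℝ E = R + 1) := ⟨hE⟩
  have : FiniteDimensional ℝ E := .of_fact_finrank_eq_succ R
  let b := (stdOrthonormalBasis ℝ (ℝ ∙ c)ᗮ).reindex
    (finCongr (Submodule.finrank_orthogonal_span_singleton (n := R) hc))
  refine ⟨fun s => b s, fun w hw => ?_⟩
  simpa using b.sum_sq_inner_right ⟨w, Submodule.mem_orthogonal_singleton_iff_inner_right.2 hw⟩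

lemma coeffs_eq_of_forall_sum_sq_add_mul_eq {ι : Type*} [Fintype ι] {a b : ι → ℝ} {p q : ℝ}
    (h : ∀ c : ℝ, ∑ t, (a t + c * b t) ^ 2 = p + q * c ^ 2) :
    ∑ t, a t ^ 2 = p ∧ ∑ t, a t * b t = 0 ∧ ∑ t, b t ^ 2 = q := by
  have expand : ∀ c : ℝ, ∑ t, (a t + c * b t) ^ 2
      = ∑ t, a t ^ 2 + 2 * c * ∑ t, a t * b t + c ^ 2 * ∑ t, b t ^ 2 := fun c => by
    simp only [mul_sum, ← sum_add_distrib]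
    exact sum_congr rfl fun t _ => by ring
  have h₀ := h 0
  have h₁ := h 1
  have h₂ := h (-1)
  simp only [expand] at h₀ h₁ h₂
  refine ⟨by linarith, by linarith, by linarith⟩

lemma dotProduct_eq_of_forall_sum_sq_dotProduct_eq {m R : ℕ} (K : Fin R → Fin m → ℝ) (i₀ : Fin m)
    (h : ∀ x : Fin m → ℝ, ∑ t, (K t ⬝ᵥ x) ^ 2 = x i₀ ^ 2) (t : Fin R) (x : Fin m → ℝ) :
    K t ⬝ᵥ x = K t i₀ * x i₀ := by
  have hK : ∀ i ≠ i₀, K t i = 0 := fun i hi => by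
    have hsum : ∑ t, K t i ^ 2 = 0 := by simpa [hi.symm] using h (Pi.single i 1)
    exact (sum_mul_self_eq_zero_iff _ _).1 (by simpa only [sq] using hsum) t (mem_univ t)
  rw [dotProduct, sum_eq_single i₀ (fun i _ hi => by rw [hK i hi, zero_mul]) (by simp)]

section Bilin

variable {m n : ℕ}

def bilin (A : Fin m → Fin n → ℝ) (x : Fin m → ℝ) (y : Fin n → ℝ) : ℝ :=
  ∑ i, ∑ j, A i j * x i * y j

lemma isSOSDecomp_iff {R : ℕ} {P : (Fin m → ℝ) → (Fin n → ℝ) → ℝ}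
    {L : Fin R → Fin m → Fin n → ℝ} :
    IsSOSDecomp m n R P L ↔ ∀ x y, P x y = ∑ t, bilin (L t) x y ^ 2 :=
  Iff.rfl

@[simp]
lemma bilin_single (A : Fin m → Fin n → ℝ) (i : Fin m) (j : Fin n) :
    bilin A (Pi.single i 1) (Pi.single j 1) = A i j := by
  simp [bilin, Pi.single_apply]

lemma bilin_add_left (A : Fin m → Fin n → ℝ) (x x' : Fin m → ℝ) (y : Fin n → ℝ) :
    bilin A (x + x') y = bilin A x y + bilin A x' y := by
  simp only [bilin, Pi.add_apply, mul_add, add_mul, sum_add_distrib]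

lemma bilin_add_right (A : Fin m → Fin n → ℝ) (x : Fin m → ℝ) (y y' : Fin n → ℝ) :
    bilin A x (y + y') = bilin A x y + bilin A x y' := by
  simp only [bilin, Pi.add_apply, mul_add, sum_add_distrib]

lemma bilin_sub_right (A : Fin m → Fin n → ℝ) (x : Fin m → ℝ) (y y' : Fin n → ℝ) :
    bilin A x (y - y') = bilin A x y - bilin A x y' := by
  simp only [bilin, Pi.sub_apply, mul_sub, sum_sub_distrib]

lemma bilin_sum_mul {R : ℕ} (c : Fin R → ℝ) (A : Fin R → Fin m → Fin n → ℝ)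
    (x : Fin m → ℝ) (y : Fin n → ℝ) :
    bilin (fun i j => ∑ t, c t * A t i j) x y = ∑ t, c t * bilin (A t) x y := by
  simp only [bilin, sum_mul, mul_sum]
  refine (sum_congr rfl fun i _ => sum_comm).trans sum_comm |>.trans (sum_congr rfl fun t _ => ?_)
  exact sum_congr rfl fun i _ => sum_congr rfl fun j _ => by ring

lemma bilin_transpose (A : Fin m → Fin n → ℝ) (x : Fin m → ℝ) (y : Fin n → ℝ) :
    bilin (fun j i => A i j) y x = bilin A x y := by
  rw [bilin, sum_comm]
  exact sum_congr rfl fun i _ => sum_congr rfl fun j _ => by ring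

lemma bilin_snoc (A : Fin m → Fin (n + 1) → ℝ) (x : Fin m → ℝ) (y : Fin n → ℝ) (c : ℝ) :
    bilin A x (Fin.snoc y c) =
      bilin (fun i j => A i j.castSucc) x y + c * ((fun i => A i (Fin.last n)) ⬝ᵥ x) := by
  simp only [bilin, Fin.sum_univ_castSucc, Fin.snoc_castSucc, Fin.snoc_last, sum_add_distrib,
    dotProduct, mul_sum]
  congr 1
  exact sum_congr rfl fun i _ => by ring

lemma bilin_eq_zero_of_forall_bilin_mul_eq_zero (A : Fin m → Fin n → ℝ) (i₀ : Fin m)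
    (h : ∀ x y, bilin A x y * x i₀ = 0) (x : Fin m → ℝ) (y : Fin n → ℝ) : bilin A x y = 0 := by
  have hA : ∀ x, x i₀ ≠ 0 → bilin A x y = 0 := fun x hx =>
    (mul_eq_zero.1 (h x y)).resolve_right hx
  by_cases hx : x i₀ = 0
  · have h₁ := hA (x + Pi.single i₀ 1) (by simp [hx])
    rwa [bilin_add_left, hA (Pi.single i₀ 1) (by simp), add_zero] at h₁
  · exact hA x hx

end Bilin

section SOSRank

variable {m n : ℕ} {P : (Fin m → ℝ) → (Fin n → ℝ) → ℝ}

lemma sosRank_le {R : ℕ} {L : Fin R → Fin m → Fin n → ℝ} (hL : IsSOSDecomp m n R P L) :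
    sosRank m n P ≤ R :=
  Nat.sInf_le ⟨L, hL⟩

lemma exists_isSOSDecomp_sosRank (h : ∃ R L, IsSOSDecomp m n R P L) :
    ∃ L, IsSOSDecomp m n (sosRank m n P) P L :=
  Nat.sInf_mem h

lemma exists_isSOSDecomp_of_sum_mul_bilin_eq_zero {R : ℕ} {L : Fin (R + 1) → Fin m → Fin n → ℝ}
    (hL : IsSOSDecomp m n (R + 1) P L) {c : Fin (R + 1) → ℝ} (hc : c ≠ 0)
    (hrel : ∀ x y, ∑ t, c t * bilin (L t) x y = 0) :
    ∃ L' : Fin R → Fin m → Fin n → ℝ, IsSOSDecomp m n R P L' := by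
  obtain ⟨u, hu⟩ := exists_sum_sq_inner_eq_norm_sq_of_inner_eq_zero (R := R)
    (E := EuclideanSpace ℝ (Fin (R + 1))) (by simp) (c := WithLp.toLp 2 c) (by simpa using hc)
  refine ⟨fun s i j => ∑ t, u s t * L t i j, fun x y => ?_⟩
  have h := hu (WithLp.toLp 2 fun t => bilin (L t) x y) (by
    simpa [PiLp.inner_apply, mul_comm] using hrel x y)
  calc P x y = ∑ t, bilin (L t) x y ^ 2 := hL x y
    _ = ∑ s, (∑ t, u s t * bilin (L t) x y) ^ 2 := by
      simpa [EuclideanSpace.real_norm_sq_eq, PiLp.inner_apply, mul_comm] using h.symm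
    _ = ∑ s, bilin (fun i j => ∑ t, u s t * L t i j) x y ^ 2 := by
      simp only [bilin_sum_mul]

lemma exists_isSOSDecomp_of_snoc {Q : (Fin m → ℝ) → (Fin (n + 1) → ℝ) → ℝ} (i₀ : Fin m)
    (hQ : ∀ x y c, Q x (Fin.snoc y c) = P x y + x i₀ ^ 2 * c ^ 2) {R : ℕ}
    {L : Fin R → Fin m → Fin (n + 1) → ℝ} (hL : IsSOSDecomp m (n + 1) R Q L) :
    ∃ R', R = R' + 1 ∧ ∃ L' : Fin R' → Fin m → Fin n → ℝ, IsSOSDecomp m n R' P L' := by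
  set M : Fin R → Fin m → Fin n → ℝ := fun t i j => L t i j.castSucc
  set N : Fin R → Fin m → ℝ := fun t i => L t i (Fin.last n)
  have hcoeffs : ∀ x y, ∑ t, bilin (M t) x y ^ 2 = P x y ∧
      ∑ t, bilin (M t) x y * (N t ⬝ᵥ x) = 0 ∧ ∑ t, (N t ⬝ᵥ x) ^ 2 = x i₀ ^ 2 := fun x y =>
    coeffs_eq_of_forall_sum_sq_add_mul_eq fun c => by
      simp only [← hQ, isSOSDecomp_iff.1 hL, bilin_snoc, M, N]
  have hN := dotProduct_eq_of_forall_sum_sq_dotProduct_eq N i₀ fun x => (hcoeffs x 0).2.2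
  have hnorm : ∑ t, N t i₀ ^ 2 = 1 := by simpa [hN] using (hcoeffs (Pi.single i₀ 1) 0).2.2
  have hrel : ∀ x y, ∑ t, N t i₀ * bilin (M t) x y = 0 := by
    intro x y
    rw [← bilin_sum_mul]
    refine bilin_eq_zero_of_forall_bilin_mul_eq_zero _ i₀ (fun x y => ?_) x y
    rw [bilin_sum_mul, sum_mul, ← (hcoeffs x y).2.1]
    exact sum_congr rfl fun t _ => by rw [hN]; ring
  obtain ⟨R', rfl⟩ : ∃ R', R = R' + 1 :=
    Nat.exists_eq_succ_of_ne_zero (by rintro rfl; simp at hnorm)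
  exact ⟨R', rfl, exists_isSOSDecomp_of_sum_mul_bilin_eq_zero (fun x y => (hcoeffs x y).1.symm)
    (c := fun t => N t i₀) (fun h => by simp [funext_iff.1 h] at hnorm) hrel⟩

lemma sosRank_add_one_le_of_snoc {Q : (Fin m → ℝ) → (Fin (n + 1) → ℝ) → ℝ} (i₀ : Fin m)
    (hQ : ∀ x y c, Q x (Fin.snoc y c) = P x y + x i₀ ^ 2 * c ^ 2)
    (h : ∃ R L, IsSOSDecomp m (n + 1) R Q L) :
    sosRank m n P + 1 ≤ sosRank m (n + 1) Q := by
  obtain ⟨L, hL⟩ := exists_isSOSDecomp_sosRank h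
  obtain ⟨R', hR', L', hL'⟩ := exists_isSOSDecomp_of_snoc i₀ hQ hL
  exact hR' ▸ Nat.add_le_add_right (sosRank_le hL') 1

end SOSRank

section SimpleForm

variable {m n : ℕ}

def supportSnoc (S : Finset (Fin m × Fin n)) (i₀ : Fin m) : Finset (Fin m × Fin (n + 1)) :=
  insert (i₀, Fin.last n) (S.map ((Function.Embedding.refl _).prodMap Fin.castSuccEmb))

lemma simpleForm_supportSnoc (S : Finset (Fin m × Fin n)) (i₀ : Fin m) (x : Fin m → ℝ)
    (y : Fin n → ℝ) (c : ℝ) :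
    simpleForm m (n + 1) (supportSnoc S i₀) x (Fin.snoc y c) =
      simpleForm m n S x y + x i₀ ^ 2 * c ^ 2 := by
  rw [simpleForm, supportSnoc, sum_insert (by simp [Fin.castSucc_ne_last]), sum_map, add_comm]
  simp [simpleForm]

lemma simpleForm_single (S : Finset (Fin m × Fin n)) (i : Fin m) (j : Fin n) :
    simpleForm m n S (Pi.single i 1) (Pi.single j 1) = if (i, j) ∈ S then 1 else 0 := by
  have h : ∀ p : Fin m × Fin n, (Pi.single i 1 : Fin m → ℝ) p.1 ^ 2 *
      (Pi.single j 1 : Fin n → ℝ) p.2 ^ 2 = if p = (i, j) then 1 else 0 := by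
    rintro ⟨a, b⟩
    by_cases ha : a = i <;> by_cases hb : b = j <;> simp [ha, hb]
  simp [simpleForm, h]

lemma simpleForm_map_prodComm (S : Finset (Fin m × Fin n)) (x : Fin m → ℝ) (y : Fin n → ℝ) :
    simpleForm n m (S.map (Equiv.prodComm _ _).toEmbedding) y x = simpleForm m n S x y := by
  simp [simpleForm, sum_map, mul_comm]

lemma exists_isSOSDecomp_simpleForm (S : Finset (Fin m × Fin n)) :
    ∃ L : Fin S.card → Fin m → Fin n → ℝ, IsSOSDecomp m n S.card (simpleForm m n S) L := by
  refine ⟨fun t i j => if (i, j) = (S.equivFin.symm t : Fin m × Fin n) then 1 else 0,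
    isSOSDecomp_iff.2 fun x y => ?_⟩
  have hbilin : ∀ p : Fin m × Fin n,
      bilin (fun i j => if (i, j) = p then 1 else 0) x y = x p.1 * y p.2 := by
    rintro ⟨a, b⟩
    rw [bilin, sum_eq_single a (by simp_all) (by simp), sum_eq_single b (by simp_all) (by simp)]
    simp
  simp only [hbilin, simpleForm, mul_pow]
  rw [← sum_coe_sort S, ← S.equivFin.symm.sum_comp]

lemma exists_isSOSDecomp_sosRank_simpleForm (S : Finset (Fin m × Fin n)) :
    ∃ L, IsSOSDecomp m n (sosRank m n (simpleForm m n S)) (simpleForm m n S) L :=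
  exists_isSOSDecomp_sosRank ⟨_, exists_isSOSDecomp_simpleForm S⟩

variable {R : ℕ} {S : Finset (Fin m × Fin n)} {L : Fin R → Fin m → Fin n → ℝ}

lemma IsSOSDecomp.map_prodComm (hL : IsSOSDecomp m n R (simpleForm m n S) L) :
    IsSOSDecomp n m R (simpleForm n m (S.map (Equiv.prodComm _ _).toEmbedding))
      (fun t j i => L t i j) := isSOSDecomp_iff.2 fun y x => by
  rw [simpleForm_map_prodComm, isSOSDecomp_iff.1 hL x y]
  simp only [bilin_transpose]

lemma sum_sq_coeff_eq_ite (hL : IsSOSDecomp m n R (simpleForm m n S) L) (i : Fin m) (j : Fin n) :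
    ∑ t, L t i j ^ 2 = if (i, j) ∈ S then 1 else 0 := by
  simpa [simpleForm_single] using (isSOSDecomp_iff.1 hL (Pi.single i 1) (Pi.single j 1)).symm

lemma coeff_eq_zero_of_notMem (hL : IsSOSDecomp m n R (simpleForm m n S) L) {i : Fin m}
    {j : Fin n} (h : (i, j) ∉ S) (t : Fin R) : L t i j = 0 := by
  have hsum := sum_sq_coeff_eq_ite hL i j
  rw [if_neg h] at hsum
  exact (sum_mul_self_eq_zero_iff _ _).1 (by simpa only [sq] using hsum) t (mem_univ t)

lemma sum_bilin_mul_bilin_eq_zero (hL : IsSOSDecomp m n R (simpleForm m n S) L) (x : Fin m → ℝ)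
    {y y' : Fin n → ℝ} (h : ∀ j, y j * y' j = 0) :
    ∑ t, bilin (L t) x y * bilin (L t) x y' = 0 := by
  have hP : simpleForm m n S x (y + y') = simpleForm m n S x (y - y') :=
    sum_congr rfl fun p _ => by
      simp only [Pi.add_apply, Pi.sub_apply]
      linear_combination 4 * x p.1 ^ 2 * h p.2
  simp only [isSOSDecomp_iff.1 hL, bilin_add_right, bilin_sub_right] at hP
  have hdiff : ∑ t, (bilin (L t) x y + bilin (L t) x y') ^ 2
      - ∑ t, (bilin (L t) x y - bilin (L t) x y') ^ 2
      = 4 * ∑ t, bilin (L t) x y * bilin (L t) x y' := by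
    rw [← sum_sub_distrib, mul_sum]
    exact sum_congr rfl fun t _ => by ring
  linarith

lemma single_mul_single_of_ne {j l : Fin n} (h : j ≠ l) (b : Fin n) :
    (Pi.single j 1 : Fin n → ℝ) b * (Pi.single l 1 : Fin n → ℝ) b = 0 := by
  by_cases hb : b = j <;> simp [Pi.single_apply, hb, h]

lemma sum_coeff_mul_coeff_eq_zero_of_ne_right (hL : IsSOSDecomp m n R (simpleForm m n S) L)
    (i : Fin m) {j l : Fin n} (hjl : j ≠ l) : ∑ t, L t i j * L t i l = 0 := by
  simpa using sum_bilin_mul_bilin_eq_zero hL (Pi.single i 1) (single_mul_single_of_ne hjl)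

lemma sum_coeff_mul_coeff_eq_zero_of_ne_left (hL : IsSOSDecomp m n R (simpleForm m n S) L)
    {i k : Fin m} (hik : i ≠ k) (j : Fin n) : ∑ t, L t i j * L t k j = 0 :=
  sum_coeff_mul_coeff_eq_zero_of_ne_right hL.map_prodComm j hik

lemma sum_coeff_mul_coeff_add_sum_eq_zero (hL : IsSOSDecomp m n R (simpleForm m n S) L)
    (i k : Fin m) {j l : Fin n} (hjl : j ≠ l) :
    ∑ t, L t i j * L t k l + ∑ t, L t k j * L t i l = 0 := by
  have h := sum_bilin_mul_bilin_eq_zero hL (Pi.single i 1 + Pi.single k 1)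
    (single_mul_single_of_ne hjl)
  simp only [bilin_add_left, bilin_single, add_mul, mul_add, sum_add_distrib] at h
  linarith [sum_coeff_mul_coeff_eq_zero_of_ne_right hL i hjl,
    sum_coeff_mul_coeff_eq_zero_of_ne_right hL k hjl]

end SimpleForm

section RectangleFree

variable {m n : ℕ}

def IsRectangleFree (S : Finset (Fin m × Fin n)) : Prop :=
  ∀ ⦃i k j l⦄, (i, j) ∈ S → (k, l) ∈ S → (i, l) ∈ S → (k, j) ∈ S → i = k ∨ j = l

lemma orthonormal_coeff_of_isRectangleFree {R : ℕ} {S : Finset (Fin m × Fin n)}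
    {L : Fin R → Fin m → Fin n → ℝ} (hL : IsSOSDecomp m n R (simpleForm m n S) L)
    (hS : IsRectangleFree S) :
    Orthonormal ℝ fun p : S =>
      (WithLp.toLp 2 fun t => L t p.1.1 p.1.2 : EuclideanSpace ℝ (Fin R)) := by
  rw [orthonormal_iff_ite]
  rintro ⟨⟨i, j⟩, hp⟩ ⟨⟨k, l⟩, hq⟩
  simp only [PiLp.inner_apply, RCLike.inner_apply, conj_trivial, Subtype.mk.injEq, Prod.mk.injEq]
  split_ifs with h
  · obtain ⟨rfl, rfl⟩ := h
    simpa [sq, hp] using sum_sq_coeff_eq_ite hL i j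
  by_cases hik : i = k
  · subst hik
    exact sum_coeff_mul_coeff_eq_zero_of_ne_right hL i fun hlj => h ⟨rfl, hlj.symm⟩
  by_cases hjl : j = l
  · subst hjl
    exact sum_coeff_mul_coeff_eq_zero_of_ne_left hL (Ne.symm hik) j
  have hcorner : ∑ t, L t i l * L t k j = 0 := by
    by_cases hil : (i, l) ∈ S
    · have hkj : (k, j) ∉ S := fun hkj => (hS hp hq hil hkj).elim hik hjl
      simp [coeff_eq_zero_of_notMem hL hkj]
    · simp [coeff_eq_zero_of_notMem hL hil]
  linarith [sum_coeff_mul_coeff_add_sum_eq_zero hL k i (Ne.symm hjl)]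

lemma card_le_sosRank_of_isRectangleFree {S : Finset (Fin m × Fin n)} (hS : IsRectangleFree S) :
    S.card ≤ sosRank m n (simpleForm m n S) := by
  obtain ⟨L, hL⟩ := exists_isSOSDecomp_sosRank_simpleForm S
  simpa using (orthonormal_coeff_of_isRectangleFree hL hS).linearIndependent.fintype_card_le_finrank

end RectangleFree

section BSRsimple

variable {m n : ℕ}

lemma sosRank_simpleForm_le_BSRsimple (S : Finset (Fin m × Fin n)) :
    sosRank m n (simpleForm m n S) ≤ BSRsimple m n :=
  le_csSup (Set.finite_range _).bddAbove ⟨S, rfl⟩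

lemma exists_sosRank_simpleForm_eq_BSRsimple (m n : ℕ) :
    ∃ S : Finset (Fin m × Fin n), sosRank m n (simpleForm m n S) = BSRsimple m n :=
  Nat.sSup_mem (Set.range_nonempty fun S => sosRank m n (simpleForm m n S))
    (Set.finite_range _).bddAbove

lemma BSRsimple_le_swap (m n : ℕ) : BSRsimple m n ≤ BSRsimple n m := by
  obtain ⟨S, hS⟩ := exists_sosRank_simpleForm_eq_BSRsimple m n
  set T := S.map (Equiv.prodComm _ _).toEmbedding
  obtain ⟨L, hL⟩ := exists_isSOSDecomp_sosRank_simpleForm T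
  have hTT : T.map (Equiv.prodComm _ _).toEmbedding = S := by simp [T, map_map]
  rw [← hS]
  exact (hTT ▸ sosRank_le hL.map_prodComm).trans (sosRank_simpleForm_le_BSRsimple T)

lemma BSRsimple_comm (m n : ℕ) : BSRsimple m n = BSRsimple n m :=
  le_antisymm (BSRsimple_le_swap m n) (BSRsimple_le_swap n m)

lemma add_one_le_BSRsimple_succ_right (i₀ : Fin m) : BSRsimple m n + 1 ≤ BSRsimple m (n + 1) := by
  obtain ⟨S, hS⟩ := exists_sosRank_simpleForm_eq_BSRsimple m n
  calc BSRsimple m n + 1 = sosRank m n (simpleForm m n S) + 1 := by rw [hS]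
    _ ≤ sosRank m (n + 1) (simpleForm m (n + 1) (supportSnoc S i₀)) :=
      sosRank_add_one_le_of_snoc i₀ (simpleForm_supportSnoc S i₀)
        ⟨_, exists_isSOSDecomp_simpleForm _⟩
    _ ≤ BSRsimple m (n + 1) := sosRank_simpleForm_le_BSRsimple _

lemma add_one_le_BSRsimple_succ_left (j₀ : Fin n) : BSRsimple m n + 1 ≤ BSRsimple (m + 1) n := by
  rw [BSRsimple_comm m, BSRsimple_comm (m + 1)]
  exact add_one_le_BSRsimple_succ_right j₀

lemma add_le_BSRsimple_add_right (i₀ : Fin m) (k : ℕ) :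
    BSRsimple m n + k ≤ BSRsimple m (n + k) := by
  induction k with
  | zero => rfl
  | succ k ih => exact (Nat.add_le_add_right ih 1).trans (add_one_le_BSRsimple_succ_right i₀)

lemma add_le_BSRsimple_add_left (j₀ : Fin n) (k : ℕ) :
    BSRsimple m n + k ≤ BSRsimple (m + k) n := by
  induction k with
  | zero => rfl
  | succ k ih => exact (Nat.add_le_add_right ih 1).trans (add_one_le_BSRsimple_succ_left j₀)

end BSRsimple

def hexagonSupport : Finset (Fin 3 × Fin 3) := {(0, 0), (0, 1), (1, 1), (1, 2), (2, 2), (2, 0)}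

lemma isRectangleFree_hexagonSupport : IsRectangleFree hexagonSupport := by
  unfold IsRectangleFree
  decide

lemma six_le_BSRsimple_three_three : 6 ≤ BSRsimple 3 3 :=
  (card_le_sosRank_of_isRectangleFree isRectangleFree_hexagonSupport).trans
    (sosRank_simpleForm_le_BSRsimple _)

/-- for `m, n ≥ 3`, `BSR_simple(m, n+1) ≥ BSR_simple(m, n) + 1`,
and consequently `BSR_simple(m, n) ≥ m + n`. -/
theorem BSRsimple_monotone_and_lower_bound (m n : ℕ) (hm : 3 ≤ m) (hn : 3 ≤ n) :
    BSRsimple m n + 1 ≤ BSRsimple m (n + 1) ∧ m + n ≤ BSRsimple m n := by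
  refine ⟨add_one_le_BSRsimple_succ_right ⟨0, by omega⟩, ?_⟩
  obtain ⟨a, rfl⟩ := Nat.exists_eq_add_of_le hm
  obtain ⟨b, rfl⟩ := Nat.exists_eq_add_of_le hn
  have h₃₃ := six_le_BSRsimple_three_three
  have hcol := add_le_BSRsimple_add_right (m := 3) (n := 3) 0 b
  have hrow := add_le_BSRsimple_add_left (m := 3) (n := 3 + b) 0 a
  omega
end
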